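/- arXiv:1212.2191 — 2 statements merged into one kernel-verified Lean document; each statement's English description precedes it below -/
import Mathlib

section
/- Let G be an open subset of ℝ^d, T > 0, and let Y : [0,T] × ℝ^d → C([0,T]; ℝ^d) be a map, written (t,x) ↦ Y^{t,x}, such that: (i) (t,x) ↦ Y^{t,x} is continuous from [0,T] × ℝ^d into C([0,T]; ℝ^d) with the supremum norm; (ii) Y^{t,x}(s) = x for all s ∈ [0,t]. Define τ(t,x) = min(inf{s ∈ [t,T] : Y^{t,x}(s) ∉ G}, T). Then the function (t,x) ↦ τ(t,x) is lower semicontinuous on [0,T] × ℝ^d. -/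
/-- The exit time of a continuous path `Z : [0,T] → ℝ^d` from the open set `G` after
time `t`: `min(inf {s ∈ [t,T] : Z s ∉ G}, T)`, the infimum of the empty set being `+∞`. -/
noncomputable def exitTimeAfter (d : ℕ) (T : ℝ) (G : Set (EuclideanSpace ℝ (Fin d)))
    (t : ℝ) (Z : C(Set.Icc (0:ℝ) T, EuclideanSpace ℝ (Fin d))) : ℝ :=
  sInf (insert T {s : ℝ | ∃ hs : s ∈ Set.Icc (0:ℝ) T, t ≤ s ∧ Z ⟨s, hs⟩ ∉ G})

/-! The exit time is lower semicontinuous jointly in the starting time and the path, for paths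
in the uniform topology; the theorem follows by composing with the continuous map
`(t, x) ↦ (t, Y^{t,x})`. If `c < τ(t₀, Z₀)`, pick `c < c' < τ(t₀, Z₀)`. The pairs `(t, Z)`
whose path stays in `G` on `[t, c']` form an open set: its complement is the projection along the
compact factor `[0, T]` of the closed set `{((t, Z), s) | t ≤ s ≤ c', Z s ∉ G}`. On that set the
exit time is at least `c'`. -/

open Set

section ExitTime

variable {d : ℕ} {T : ℝ} {G : Set (EuclideanSpace ℝ (Fin d))} {t : ℝ}
  {Z : C(Icc (0:ℝ) T, EuclideanSpace ℝ (Fin d))}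

lemma bddBelow_exitTimes :
    BddBelow (insert T {s : ℝ | ∃ hs : s ∈ Icc (0:ℝ) T, t ≤ s ∧ Z ⟨s, hs⟩ ∉ G}) :=
  (bddBelow_Icc.insert T).mono <| insert_subset_insert fun _ ⟨hs, _⟩ => hs

lemma exitTimeAfter_le : exitTimeAfter d T G t Z ≤ T :=
  csInf_le bddBelow_exitTimes (mem_insert _ _)

lemma le_exitTimeAfter {c : ℝ} (hcT : c ≤ T)
    (h : ∀ s : Icc (0:ℝ) T, t ≤ s → (s : ℝ) < c → Z s ∈ G) :
    c ≤ exitTimeAfter d T G t Z := by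
  refine le_csInf (insert_nonempty _ _) ?_
  rintro s (rfl | ⟨hs, hts, hZs⟩)
  · exact hcT
  · exact le_of_not_gt fun hsc => hZs (h ⟨s, hs⟩ hts hsc)

lemma mem_of_lt_exitTimeAfter {s : Icc (0:ℝ) T} (hts : t ≤ s)
    (hs : (s : ℝ) < exitTimeAfter d T G t Z) : Z s ∈ G := by
  by_contra hZs
  exact (csInf_le bddBelow_exitTimes (mem_insert_of_mem _ ⟨s.2, hts, hZs⟩)).not_gt hs

lemma isOpen_setOf_mapsTo_preimage_Icc (hG : IsOpen G) (c : ℝ) :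
    IsOpen {p : Icc (0:ℝ) T × C(Icc (0:ℝ) T, EuclideanSpace ℝ (Fin d)) |
      MapsTo p.2 (Subtype.val ⁻¹' Icc (p.1 : ℝ) c) G} := by
  let exits : Set ((Icc (0:ℝ) T × C(Icc (0:ℝ) T, EuclideanSpace ℝ (Fin d))) × Icc (0:ℝ) T) :=
    {q | (q.2 : ℝ) ∈ Icc (q.1.1 : ℝ) c ∧ q.1.2 q.2 ∈ Gᶜ}
  have hexits : IsClosed exits := by
    have ht : Continuous fun q : (Icc (0:ℝ) T × C(Icc (0:ℝ) T, EuclideanSpace ℝ (Fin d))) ×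
        Icc (0:ℝ) T => (q.1.1 : ℝ) := by fun_prop
    have hs : Continuous fun q : (Icc (0:ℝ) T × C(Icc (0:ℝ) T, EuclideanSpace ℝ (Fin d))) ×
        Icc (0:ℝ) T => (q.2 : ℝ) := by fun_prop
    refine ((isClosed_le ht hs).inter (isClosed_le hs continuous_const)).inter
      (hG.isClosed_compl.preimage ?_)
    exact continuous_eval.comp ((continuous_snd.comp continuous_fst).prodMk continuous_snd)
  convert (isClosedMap_fst_of_compactSpace _ hexits).isOpen_compl using 1
  ext p
  simp [exits, MapsTo]

theorem lowerSemicontinuous_exitTimeAfter (hG : IsOpen G) :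
    LowerSemicontinuous fun p : Icc (0:ℝ) T × C(Icc (0:ℝ) T, EuclideanSpace ℝ (Fin d)) =>
      exitTimeAfter d T G p.1 p.2 := by
  intro p c hc
  obtain ⟨c', hcc', hc'⟩ := exists_between hc
  have hp : MapsTo p.2 (Subtype.val ⁻¹' Icc (p.1 : ℝ) c') G := fun s ⟨hts, hsc'⟩ =>
    mem_of_lt_exitTimeAfter hts (hsc'.trans_lt hc')
  filter_upwards [(isOpen_setOf_mapsTo_preimage_Icc hG c').mem_nhds hp] with q hq
  refine hcc'.trans_le (le_exitTimeAfter (hc'.le.trans exitTimeAfter_le) ?_)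
  exact fun s hts hsc' => hq ⟨hts, hsc'.le⟩

end ExitTime

theorem exitTime_lowerSemicontinuous_in_initial_data_general (d : ℕ) (T : ℝ)
    (G : Set (EuclideanSpace ℝ (Fin d))) (hG : IsOpen G)
    (Y : Set.Icc (0:ℝ) T → EuclideanSpace ℝ (Fin d) →
      C(Set.Icc (0:ℝ) T, EuclideanSpace ℝ (Fin d)))
    (hYcont : Continuous fun p : Set.Icc (0:ℝ) T × EuclideanSpace ℝ (Fin d) => Y p.1 p.2) :
    LowerSemicontinuous fun p : Set.Icc (0:ℝ) T × EuclideanSpace ℝ (Fin d) =>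
      exitTimeAfter d T G (p.1 : ℝ) (Y p.1 p.2) :=
  (lowerSemicontinuous_exitTimeAfter hG).comp (continuous_fst.prodMk hYcont)

/-- If `(t,x) ↦ Y^{t,x}` is continuous from `[0,T] × ℝ^d` into `C([0,T]; ℝ^d)` with the
supremum norm, and `Y^{t,x}(s) = x` for `s ∈ [0,t]`, then the exit time
`τ(t,x) = min(inf {s ∈ [t,T] : Y^{t,x}(s) ∉ G}, T)` is lower semicontinuous in `(t,x)`. -/
theorem exitTime_lowerSemicontinuous_in_initial_data (d : ℕ) (T : ℝ) (hT : 0 < T)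
    (G : Set (EuclideanSpace ℝ (Fin d))) (hG : IsOpen G)
    (Y : Set.Icc (0:ℝ) T → EuclideanSpace ℝ (Fin d) →
      C(Set.Icc (0:ℝ) T, EuclideanSpace ℝ (Fin d)))
    (hYcont : Continuous fun p : Set.Icc (0:ℝ) T × EuclideanSpace ℝ (Fin d) => Y p.1 p.2)
    (hYinit : ∀ (t : Set.Icc (0:ℝ) T) (x : EuclideanSpace ℝ (Fin d))
      (s : Set.Icc (0:ℝ) T), (s : ℝ) ≤ (t : ℝ) → Y t x s = x) :
    LowerSemicontinuous fun p : Set.Icc (0:ℝ) T × EuclideanSpace ℝ (Fin d) =>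
      exitTimeAfter d T G (p.1 : ℝ) (Y p.1 p.2) :=
  exitTime_lowerSemicontinuous_in_initial_data_general d T G hG Y hYcont
end

section
/- Let (Ω, 𝔉, P) be a probability space, G an open subset of ℝ^d, T > 0, and U a separable metric space. Let Y : [0,T] × ℝ^d × Ω → C([0,T]; ℝ^d), written (t,x,ω) ↦ Y^{t,x}(ω), be such that: (i) for every ω ∈ Ω the map (t,x) ↦ Y^{t,x}(ω) is continuous from [0,T] × ℝ^d into C([0,T]; ℝ^d) with the supremum norm; (ii) Y^{t,x}(ω)(s) = x for all s ∈ [0,t] and all ω; (iii) for each (t,x) the map (s,ω) ↦ Y^{t,x}(ω)(s) is jointly measurable. Let α : [0,T] × Ω → U be jointly measurable, and let f : [0,T] × ℝ^d × U → [0, +∞] be Borel measurable such that for each s ∈ [0,T] and u ∈ U the function x ↦ f(s,x,u) is lower semicontinuous on ℝ^d. Define for each ω the exit time τ^{t,x}(ω) = min(inf{s ∈ [t,T] : Y^{t,x}(ω)(s) ∉ G}, T) and J(t,x) = E[ ∫_t^{τ^{t,x}} f(s, Y^{t,x}(s), α_s) ds ] ∈ [0, +∞]. Then the function (t,x) ↦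 J(t,x) is lower semicontinuous on [0,T] × ℝ^d. -/
/-!
Since `G` is open and the path `Y^{t,x}` sits at `x` before time `t`, the exit time
`τ^{t,x}(ω)` is lower semicontinuous in `(t,x)` for each `ω`. Hence for every `s ≠ τ^{t,x}(ω)`
the integrand `1_{(t, τ]}(s) f(s, Y^{t,x}_s, α_s)` is lower semicontinuous in `(t,x)`, and
Fatou's lemma, applied first in `s` and then in `ω`, passes lower semicontinuity to `J`.
Measurability of `τ` in `ω` comes from testing the path on a countable dense set of times.
-/

open MeasureTheory
open scoped ENNReal

open Set Filter Topology Metric TopologicalSpace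

theorem LowerSemicontinuousAt.lintegral {X α : Type*} [TopologicalSpace X]
    [FirstCountableTopology X] [MeasurableSpace α] {μ : Measure α} {g : X → α → ℝ≥0∞}
    {x₀ : X} (hmeas : ∀ x, AEMeasurable (g x) μ)
    (hg : ∀ᵐ a ∂μ, LowerSemicontinuousAt (fun x => g x a) x₀) :
    LowerSemicontinuousAt (fun x => ∫⁻ a, g x a ∂μ) x₀ := by
  rw [lowerSemicontinuousAt_iff_le_liminf]
  calc ∫⁻ a, g x₀ a ∂μ ≤ ∫⁻ a, liminf (fun x => g x a) (𝓝 x₀) ∂μ :=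
        lintegral_mono_ae (hg.mono fun _ ha => ha.le_liminf)
    _ ≤ liminf (fun x => ∫⁻ a, g x a ∂μ) (𝓝 x₀) := lintegral_liminf_le' hmeas

theorem measurableSet_setOf_mapsTo {Ω X E : Type*} [MeasurableSpace Ω] [TopologicalSpace X]
    [PseudoMetrizableSpace X] [PseudoEMetricSpace E] [MeasurableSpace E]
    [OpensMeasurableSpace E] {K : Set X} (hK : IsCompact K) {G : Set E} (hG : IsOpen G)
    {g : Ω → X → E} (hgc : ∀ ω, Continuous (g ω)) (hgm : ∀ x, Measurable fun ω => g ω x) :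
    MeasurableSet {ω | MapsTo (g ω) K G} := by
  obtain ⟨D, hDK, hDc, hKD⟩ := hK.isSeparable.exists_countable_dense_subset
  -- the path stays in `G` iff its distance to `Gᶜ` along `D` stays away from zero
  have hset : {ω | MapsTo (g ω) K G} = {ω | 0 < ⨅ x ∈ D, infEDist (g ω x) Gᶜ} := by
    ext ω
    have hφ : Continuous fun x => infEDist (g ω x) Gᶜ := continuous_infEDist.comp (hgc ω)
    constructor
    · intro hmaps
      rcases K.eq_empty_or_nonempty with rfl | hKne
      · simp [subset_empty_iff.mp hDK]
      obtain ⟨x, hx, hmin⟩ := hK.exists_isMinOn hKne hφ.continuousOn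
      have hxpos : 0 < infEDist (g ω x) Gᶜ := infEDist_pos_iff_notMem_closure.mpr <| by
        rw [hG.isClosed_compl.closure_eq, notMem_compl_iff]
        exact hmaps hx
      exact hxpos.trans_le (le_iInf₂ fun y hy => hmin (hDK hy))
    · intro hpos x hx
      by_contra hxG
      have hle : ⨅ y ∈ D, infEDist (g ω y) Gᶜ ≤ infEDist (g ω x) Gᶜ :=
        ContinuousWithinAt.closure_le (hKD hx) continuousWithinAt_const hφ.continuousWithinAt
          fun y hy => iInf₂_le y hy
      rw [infEDist_zero_of_mem hxG] at hle
      exact (lt_irrefl _) (hpos.trans_le hle)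
  rw [hset]
  exact measurableSet_lt measurable_const <| Measurable.biInf D hDc fun x _ =>
    continuous_infEDist.measurable.comp (hgm x)

section ExitTime

variable {d : ℕ} {T : ℝ} {G : Set (EuclideanSpace ℝ (Fin d))}

theorem isLeast_exitTimeAfter (hG : IsOpen G) (t : ℝ)
    (Z : C(Icc (0:ℝ) T, EuclideanSpace ℝ (Fin d))) :
    IsLeast (insert T (Subtype.val '' {r : Icc (0:ℝ) T | t ≤ r ∧ Z r ∉ G}))
      (exitTimeAfter d T G t Z) := by
  have hcpt : IsCompact (insert T (Subtype.val '' {r : Icc (0:ℝ) T | t ≤ r ∧ Z r ∉ G})) :=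
    ((isClosed_le continuous_const continuous_subtype_val).inter
      (hG.isClosed_compl.preimage Z.continuous)).isCompact.image continuous_subtype_val
      |>.insert T
  have himage : Subtype.val '' {r : Icc (0:ℝ) T | t ≤ r ∧ Z r ∉ G}
      = {s : ℝ | ∃ hs : s ∈ Icc (0:ℝ) T, t ≤ s ∧ Z ⟨s, hs⟩ ∉ G} := by
    ext s; simp
  rw [exitTimeAfter, ← himage]
  exact hcpt.isLeast_sInf (insert_nonempty _ _)

theorem lt_exitTimeAfter_iff (hG : IsOpen G) {t a : ℝ}
    {Z : C(Icc (0:ℝ) T, EuclideanSpace ℝ (Fin d))} :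
    a < exitTimeAfter d T G t Z ↔
      a < T ∧ ∀ r : Icc (0:ℝ) T, t ≤ r → (r : ℝ) ≤ a → Z r ∈ G := by
  have hleast := isLeast_exitTimeAfter hG t Z
  have hlt : a < exitTimeAfter d T G t Z ↔
      ∀ b ∈ insert T (Subtype.val '' {r : Icc (0:ℝ) T | t ≤ r ∧ Z r ∉ G}), a < b :=
    ⟨fun ha _ hb => ha.trans_le (hleast.2 hb), fun h => h _ hleast.1⟩
  rw [hlt, forall_mem_insert, forall_mem_image]
  refine and_congr_right fun _ => forall_congr' fun r => ?_
  simp only [mem_ofPred_eq, and_imp, not_imp_comm, not_lt]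

theorem self_le_exitTimeAfter (hG : IsOpen G) {t : ℝ} (htT : t ≤ T)
    (Z : C(Icc (0:ℝ) T, EuclideanSpace ℝ (Fin d))) : t ≤ exitTimeAfter d T G t Z := by
  rcases (isLeast_exitTimeAfter hG t Z).1 with hτ | ⟨r, ⟨htr, -⟩, hτ⟩
  · rwa [hτ]
  · rwa [← hτ]

theorem mapsTo_of_lt_exitTimeAfter (hG : IsOpen G) {t : Icc (0:ℝ) T} {s : ℝ}
    {Z : C(Icc (0:ℝ) T, EuclideanSpace ℝ (Fin d))} (hZ : ∀ r, r ≤ t → Z r = Z t)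
    (hts : (t : ℝ) ≤ s) (hs : s < exitTimeAfter d T G t Z) :
    MapsTo Z {r | (r : ℝ) ≤ s} G := by
  have hpath := (lt_exitTimeAfter_iff hG).mp hs |>.2
  intro r hrs
  rcases le_total t r with htr | hrt
  · exact hpath r htr hrs
  · rw [hZ r hrt]
    exact hpath t le_rfl hts

theorem lowerSemicontinuousAt_exitTimeAfter (hG : IsOpen G) {X : Type*} [TopologicalSpace X]
    {t : X → Icc (0:ℝ) T} {Z : X → C(Icc (0:ℝ) T, EuclideanSpace ℝ (Fin d))} {x₀ : X}
    (ht : ContinuousAt t x₀) (hZ : ContinuousAt Z x₀)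
    (hZ₀ : ∀ r, r ≤ t x₀ → Z x₀ r = Z x₀ (t x₀)) :
    LowerSemicontinuousAt (fun x => exitTimeAfter d T G (t x) (Z x)) x₀ := by
  intro s hs
  rcases lt_or_ge s (t x₀) with hst | hts
  · filter_upwards [(continuous_subtype_val.continuousAt.comp ht).eventually_const_lt hst]
      with x hx
    exact hx.trans_le (self_le_exitTimeAfter hG (t x).2.2 (Z x))
  · have hK : IsCompact {r : Icc (0:ℝ) T | (r : ℝ) ≤ s} :=
      (isClosed_le continuous_subtype_val continuous_const).isCompact
    have hsT : s < T := ((lt_exitTimeAfter_iff hG).mp hs).1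
    filter_upwards [hZ.eventually (ContinuousMap.eventually_mapsTo hK hG
      (mapsTo_of_lt_exitTimeAfter hG hZ₀ hts hs))] with x hx
    exact (lt_exitTimeAfter_iff hG).mpr ⟨hsT, fun r _ hrs => hx hrs⟩

theorem measurable_exitTimeAfter (hG : IsOpen G) {Ω : Type*} [MeasurableSpace Ω] (t : ℝ)
    {W : Ω → C(Icc (0:ℝ) T, EuclideanSpace ℝ (Fin d))}
    (hW : ∀ r, Measurable fun ω => W ω r) :
    Measurable fun ω => exitTimeAfter d T G t (W ω) := by
  refine measurable_of_Ioi fun a => ?_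
  have hK : IsCompact {r : Icc (0:ℝ) T | t ≤ r ∧ (r : ℝ) ≤ a} :=
    ((isClosed_le continuous_const continuous_subtype_val).inter
      (isClosed_le continuous_subtype_val continuous_const)).isCompact
  have hpre : (fun ω => exitTimeAfter d T G t (W ω)) ⁻¹' Ioi a
      = {_ω | a < T} ∩ {ω | MapsTo (W ω) {r | t ≤ r ∧ (r : ℝ) ≤ a} G} := by
    ext ω
    simp only [mem_preimage, mem_Ioi, lt_exitTimeAfter_iff hG, mem_inter_iff, mem_ofPred_eq,
      MapsTo, and_imp]
  rw [hpre]
  exact (MeasurableSet.const _).inter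
    (measurableSet_setOf_mapsTo hK hG (fun ω => (W ω).continuous) hW)

end ExitTime

section Cost

variable {d : ℕ} {T : ℝ} {G : Set (EuclideanSpace ℝ (Fin d))} {U : Type*}
  {f : ℝ → EuclideanSpace ℝ (Fin d) → U → ℝ≥0∞}

noncomputable def costUntilExit (hT : 0 ≤ T) (G : Set (EuclideanSpace ℝ (Fin d)))
    (f : ℝ → EuclideanSpace ℝ (Fin d) → U → ℝ≥0∞) (a : ℝ → U) (t : ℝ)
    (Z : C(Icc (0:ℝ) T, EuclideanSpace ℝ (Fin d))) : ℝ≥0∞ :=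
  ∫⁻ s in Ioc t (exitTimeAfter d T G t Z), f s (IccExtend hT Z s) (a s)

theorem costUntilExit_eq_lintegral_indicator (hT : 0 ≤ T) (a : ℝ → U) (t : ℝ)
    (Z : C(Icc (0:ℝ) T, EuclideanSpace ℝ (Fin d))) :
    costUntilExit hT G f a t Z = ∫⁻ s, (Ioc t (exitTimeAfter d T G t Z)).indicator
      (fun s => f s (IccExtend hT Z s) (a s)) s :=
  (lintegral_indicator measurableSet_Ioc _).symm

theorem measurable_costUntilExit [MeasurableSpace U] (hT : 0 ≤ T) (hG : IsOpen G)
    (hf : Measurable fun q : ℝ × EuclideanSpace ℝ (Fin d) × U => f q.1 q.2.1 q.2.2)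
    {Ω : Type*} [MeasurableSpace Ω] {a : ℝ → Ω → U} (ha : Measurable fun q : ℝ × Ω => a q.1 q.2)
    (t : ℝ) {W : Ω → C(Icc (0:ℝ) T, EuclideanSpace ℝ (Fin d))}
    (hW : Measurable fun q : Icc (0:ℝ) T × Ω => W q.2 q.1) :
    Measurable fun ω => costUntilExit hT G f (fun s => a s ω) t (W ω) := by
  simp only [costUntilExit_eq_lintegral_indicator]
  have hτ : Measurable fun ω => exitTimeAfter d T G t (W ω) :=
    measurable_exitTimeAfter hG t fun _ => hW.comp (measurable_const.prodMk measurable_id)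
  have hset : MeasurableSet {q : Ω × ℝ | q.2 ∈ Ioc t (exitTimeAfter d T G t (W q.1))} :=
    (measurableSet_lt measurable_const measurable_snd).inter
      (measurableSet_le measurable_snd (hτ.comp measurable_fst))
  have hW' : Measurable fun q : Ω × ℝ => IccExtend hT (W q.1) q.2 :=
    hW.comp (((continuous_projIcc (h := hT)).measurable.comp measurable_snd).prodMk
      measurable_fst)
  have hintegrand : Measurable fun q : Ω × ℝ => f q.2 (IccExtend hT (W q.1) q.2) (a q.2 q.1) :=
    hf.comp (measurable_snd.prodMk (hW'.prodMk (ha.comp (measurable_snd.prodMk measurable_fst))))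
  exact (hintegrand.indicator hset).lintegral_prod_right'

theorem lowerSemicontinuousAt_costUntilExit [MeasurableSpace U] (hT : 0 ≤ T) (hG : IsOpen G)
    (hf : Measurable fun q : ℝ × EuclideanSpace ℝ (Fin d) × U => f q.1 q.2.1 q.2.2)
    (hflsc : ∀ s u, LowerSemicontinuous fun x => f s x u) {a : ℝ → U} (ha : Measurable a)
    {X : Type*} [TopologicalSpace X] [FirstCountableTopology X]
    {t : X → Icc (0:ℝ) T} {Z : X → C(Icc (0:ℝ) T, EuclideanSpace ℝ (Fin d))} {x₀ : X}
    (ht : ContinuousAt t x₀) (hZ : ContinuousAt Z x₀)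
    (hZ₀ : ∀ r, r ≤ t x₀ → Z x₀ r = Z x₀ (t x₀)) :
    LowerSemicontinuousAt (fun x => costUntilExit hT G f a (t x) (Z x)) x₀ := by
  simp only [costUntilExit_eq_lintegral_indicator]
  refine LowerSemicontinuousAt.lintegral
    (fun x => (Measurable.indicator ?_ measurableSet_Ioc).aemeasurable) ?_
  · exact hf.comp (measurable_id.prodMk
      (((Z x).continuous.comp continuous_projIcc).measurable.prodMk ha))
  set τ₀ := exitTimeAfter d T G (t x₀) (Z x₀)
  -- the only time at which the integrand can jump down is the exit time itself
  have hae : ∀ᵐ s, s ≠ τ₀ := by simpa using (countable_singleton τ₀).ae_notMem volume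
  filter_upwards [hae] with s hsτ
  by_cases hs : s ∈ Ioc (t x₀ : ℝ) τ₀
  · have hsτ₀ : s < τ₀ := lt_of_le_of_ne hs.2 hsτ
    have hsIcc : s ∈ Icc (0:ℝ) T :=
      ⟨(t x₀).2.1.trans hs.1.le, ((lt_exitTimeAfter_iff hG).mp hsτ₀).1.le⟩
    have hev : ∀ᶠ x in 𝓝 x₀, s ∈ Ioc (t x : ℝ) (exitTimeAfter d T G (t x) (Z x)) :=
      ((continuous_subtype_val.continuousAt.comp ht).eventually_lt_const hs.1).and
        (lowerSemicontinuousAt_exitTimeAfter hG ht hZ hZ₀ s hsτ₀)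
        |>.mono fun _ h => ⟨h.1, h.2.le⟩
    have hlsc : LowerSemicontinuousAt (fun x => f s (Z x ⟨s, hsIcc⟩) (a s)) x₀ :=
      (hflsc s (a s) _).comp ((continuous_eval_const _).continuousAt.comp hZ)
    intro y hy
    dsimp only at hy ⊢
    rw [indicator_of_mem hs, IccExtend_of_mem hT _ hsIcc] at hy
    filter_upwards [hev, hlsc y hy] with x hx hy'
    rwa [indicator_of_mem hx, IccExtend_of_mem hT _ hsIcc]
  · intro y hy
    dsimp only at hy
    rw [indicator_of_notMem hs] at hy
    exact absurd hy ENNReal.not_lt_zero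

end Cost

theorem expected_payoff_lowerSemicontinuous_general (d : ℕ) (T : ℝ) (hT : 0 < T)
    (G : Set (EuclideanSpace ℝ (Fin d))) (hG : IsOpen G)
    {Ω : Type*} [MeasurableSpace Ω] (P : Measure Ω)
    {U : Type*} [MeasurableSpace U]
    (Y : Set.Icc (0:ℝ) T → EuclideanSpace ℝ (Fin d) → Ω →
      C(Set.Icc (0:ℝ) T, EuclideanSpace ℝ (Fin d)))
    (hYcont : ∀ ω : Ω,
      Continuous fun p : Set.Icc (0:ℝ) T × EuclideanSpace ℝ (Fin d) => Y p.1 p.2 ω)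
    (hYinit : ∀ (t : Set.Icc (0:ℝ) T) (x : EuclideanSpace ℝ (Fin d)) (ω : Ω)
      (s : Set.Icc (0:ℝ) T), (s : ℝ) ≤ (t : ℝ) → Y t x ω s = x)
    (hYmeas : ∀ (t : Set.Icc (0:ℝ) T) (x : EuclideanSpace ℝ (Fin d)),
      Measurable fun q : Set.Icc (0:ℝ) T × Ω => Y t x q.2 q.1)
    (α : ℝ → Ω → U) (hα : Measurable fun q : ℝ × Ω => α q.1 q.2)
    (f : ℝ → EuclideanSpace ℝ (Fin d) → U → ℝ≥0∞)
    (hf : Measurable fun q : ℝ × EuclideanSpace ℝ (Fin d) × U => f q.1 q.2.1 q.2.2)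
    (hflsc : ∀ (s : ℝ) (u : U), LowerSemicontinuous fun x => f s x u) :
    LowerSemicontinuous fun p : Set.Icc (0:ℝ) T × EuclideanSpace ℝ (Fin d) =>
      ∫⁻ ω,
        (∫⁻ s in Set.Ioc (p.1 : ℝ) (exitTimeAfter d T G (p.1 : ℝ) (Y p.1 p.2 ω)),
          f s (Set.IccExtend hT.le (Y p.1 p.2 ω) s) (α s ω)) ∂P := by
  intro p₀
  refine LowerSemicontinuousAt.lintegral
    (fun p => (measurable_costUntilExit hT.le hG hf hα p.1 (hYmeas p.1 p.2)).aemeasurable)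
    (ae_of_all _ fun ω => ?_)
  exact lowerSemicontinuousAt_costUntilExit hT.le hG hf hflsc
    (hα.comp (measurable_id.prodMk measurable_const)) continuous_fst.continuousAt
    (hYcont ω).continuousAt fun r hr => (hYinit _ _ ω r hr).trans (hYinit _ _ ω _ le_rfl).symm

/-- Lemma 4 of the paper in abstract form.  Let `(Ω, 𝔉, P)` be a probability space,
`G ⊂ ℝ^d` open, `U` a separable metric space, and let the random field
`(t,x,ω) ↦ Y^{t,x}(ω) ∈ C([0,T]; ℝ^d)` satisfy:
(i) for every `ω`, `(t,x) ↦ Y^{t,x}(ω)` is continuous in the supremum norm;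
(ii) `Y^{t,x}(ω)(s) = x` for `s ∈ [0,t]`;
(iii) for each `(t,x)`, `(s,ω) ↦ Y^{t,x}(ω)(s)` is jointly measurable.
Let `α : [0,T] × Ω → U` be jointly measurable and `f : [0,T] × ℝ^d × U → [0,∞]` Borel
with `x ↦ f(s,x,u)` lower semicontinuous.  Then
`J(t,x) = E ∫_t^{τ^{t,x}} f(s, Y^{t,x}(s), α_s) ds` is lower semicontinuous in `(t,x)`. -/
theorem expected_payoff_lowerSemicontinuous (d : ℕ) (T : ℝ) (hT : 0 < T)
    (G : Set (EuclideanSpace ℝ (Fin d))) (hG : IsOpen G)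
    {Ω : Type*} [MeasurableSpace Ω] (P : Measure Ω) [IsProbabilityMeasure P]
    {U : Type*} [MetricSpace U] [TopologicalSpace.SeparableSpace U]
    [MeasurableSpace U] [BorelSpace U]
    (Y : Set.Icc (0:ℝ) T → EuclideanSpace ℝ (Fin d) → Ω →
      C(Set.Icc (0:ℝ) T, EuclideanSpace ℝ (Fin d)))
    (hYcont : ∀ ω : Ω,
      Continuous fun p : Set.Icc (0:ℝ) T × EuclideanSpace ℝ (Fin d) => Y p.1 p.2 ω)
    (hYinit : ∀ (t : Set.Icc (0:ℝ) T) (x : EuclideanSpace ℝ (Fin d)) (ω : Ω)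
      (s : Set.Icc (0:ℝ) T), (s : ℝ) ≤ (t : ℝ) → Y t x ω s = x)
    (hYmeas : ∀ (t : Set.Icc (0:ℝ) T) (x : EuclideanSpace ℝ (Fin d)),
      Measurable fun q : Set.Icc (0:ℝ) T × Ω => Y t x q.2 q.1)
    (α : ℝ → Ω → U) (hα : Measurable fun q : ℝ × Ω => α q.1 q.2)
    (f : ℝ → EuclideanSpace ℝ (Fin d) → U → ℝ≥0∞)
    (hf : Measurable fun q : ℝ × EuclideanSpace ℝ (Fin d) × U => f q.1 q.2.1 q.2.2)
    (hflsc : ∀ (s : ℝ) (u : U), LowerSemicontinuous fun x => f s x u) :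
    LowerSemicontinuous fun p : Set.Icc (0:ℝ) T × EuclideanSpace ℝ (Fin d) =>
      ∫⁻ ω,
        (∫⁻ s in Set.Ioc (p.1 : ℝ) (exitTimeAfter d T G (p.1 : ℝ) (Y p.1 p.2 ω)),
          f s (Set.IccExtend hT.le (Y p.1 p.2 ω) s) (α s ω)) ∂P :=
  expected_payoff_lowerSemicontinuous_general d T hT G hG P Y hYcont hYinit hYmeas α hα f hf hflsc
end
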